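/- arXiv:2011.05403 — 2 statements merged into one kernel-verified Lean document; each statement's English description precedes it below -/
import Mathlib

section
/- Let (q(i))_{i≥1} be nonnegative reals and R > 0 such that the power series φ(z) = Σ_{i≥1} q(i) z^i has radius of convergence R. Suppose for each pair n < m there is given R_{n,m} > R with Σ_{i=1}^{k(m)} c_{n,m}(i) R_{n,m}^i = 1, where 0 ≤ c_{n,m}(i) ≤ q(i) for all i and c_{n,m}(m) = q(m). Then for every n, liminf_{m→∞} R_{n,m} = R. -/
open Filter Finset

/-!
Since `R < R_{n,m}`, the liminf is at least `R`. Conversely, for `r > R` the Cauchy–Hadamard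
condition gives infinitely many `m` with `q(m) r^m > 1`, while the single term
`c_{n,m}(m) R_{n,m}^m = q(m) R_{n,m}^m` of a nonnegative sum equal to `1` is at most `1`;
hence `R_{n,m} < r` for infinitely many `m`.
-/

theorem Filter.liminf_eq_of_eventually_ge_of_frequently_lt {α β : Type*}
    [ConditionallyCompleteLinearOrder β] [DenselyOrdered β] [NoMaxOrder β]
    {l : Filter α} {f : α → β} {a : β}
    (hge : ∀ᶠ x in l, a ≤ f x) (hlt : ∀ b, a < b → ∃ᶠ x in l, f x < b) :
    liminf f l = a := by
  obtain ⟨b, hb⟩ := exists_gt a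
  have hcob : IsCoboundedUnder (· ≥ ·) l f :=
    IsCoboundedUnder.of_frequently_le ((hlt b hb).mono fun _ h => h.le)
  refine le_antisymm (le_of_forall_gt_imp_ge_of_dense fun c hc => ?_) (le_liminf_of_le hcob hge)
  exact liminf_le_of_frequently_le ((hlt c hc).mono fun _ h => h.le) ⟨a, hge⟩

theorem Real.frequently_one_lt_mul_pow_of_inv_lt_limsup {q : ℕ → ℝ} (hq : ∀ i, 0 ≤ q i)
    {r : ℝ} (hr : 0 < r) (h : r⁻¹ < limsup (fun m => q m ^ ((1 : ℝ) / m)) atTop) :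
    ∃ᶠ m in atTop, 1 < q m * r ^ m := by
  have hcob : IsCoboundedUnder (· ≤ ·) atTop (fun m => q m ^ ((1 : ℝ) / m)) :=
    IsCoboundedUnder.of_frequently_ge (a := 0)
      (Frequently.of_forall fun m => Real.rpow_nonneg (hq m) _)
  refine ((frequently_lt_of_lt_limsup hcob h).and_eventually (eventually_ne_atTop 0)).mono ?_
  rintro m ⟨hroot, hm⟩
  have hpow : r⁻¹ ^ m < q m := by
    rw [one_div, Real.lt_rpow_inv_iff_of_pos (by positivity) (hq m) (by positivity),
      Real.rpow_natCast] at hroot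
    exact hroot
  rwa [inv_pow, inv_lt_iff_one_lt_mul₀ (by positivity)] at hpow

theorem mul_pow_le_one_of_sum_eq_one {s : Finset ℕ} {c : ℕ → ℝ} {x : ℝ}
    (hc : ∀ i ∈ s, 0 ≤ c i) (hx : 0 ≤ x) (h : ∑ i ∈ s, c i * x ^ i = 1) {m : ℕ} (hm : m ∈ s) :
    c m * x ^ m ≤ 1 :=
  h ▸ single_le_sum (fun i hi => mul_nonneg (hc i hi) (pow_nonneg hx i)) hm

theorem stmt1 (q : ℕ → ℝ) (hq : ∀ i, 0 ≤ q i) (R : ℝ) (hR : 0 < R)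
    (hCH : Filter.limsup (fun m => (q m) ^ ((1 : ℝ) / m)) atTop = 1 / R)
    (Rnm : ℕ → ℕ → ℝ) (k : ℕ → ℕ) (c : ℕ → ℕ → ℕ → ℝ)
    (hck : ∀ n m, n < m → m ≤ k m)
    (hc0 : ∀ n m i, n < m → 0 ≤ c n m i ∧ c n m i ≤ q i)
    (hcm : ∀ n m, n < m → c n m m = q m)
    (hRnm : ∀ n m, n < m → R < Rnm n m)
    (heq : ∀ n m, n < m → ∑ i ∈ Finset.Icc 1 (k m), c n m i * (Rnm n m) ^ i = 1) :
    ∀ n, Filter.liminf (fun m => Rnm n m) atTop = R := by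
  intro n
  refine liminf_eq_of_eventually_ge_of_frequently_lt
    ((eventually_gt_atTop n).mono fun m hm => (hRnm n m hm).le) fun r hr => ?_
  have hr0 : 0 < r := hR.trans hr
  have hinv : r⁻¹ < limsup (fun m => q m ^ ((1 : ℝ) / m)) atTop := by
    rw [hCH, one_div]
    exact inv_strictAnti₀ hR hr
  refine ((Real.frequently_one_lt_mul_pow_of_inv_lt_limsup hq hr0 hinv).and_eventually
    (eventually_gt_atTop n)).mono ?_
  rintro m ⟨hbig, hnm⟩
  have hsmall : q m * Rnm n m ^ m ≤ 1 := hcm n m hnm ▸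
    mul_pow_le_one_of_sum_eq_one (fun i _ => (hc0 n m i hnm).1) (hR.trans (hRnm n m hnm)).le
      (heq n m hnm) (mem_Icc.2 ⟨Nat.one_le_of_lt hnm, hck n m hnm⟩)
  exact lt_of_pow_lt_pow_left₀ m hr0.le (lt_of_mul_lt_mul_left (hsmall.trans_lt hbig) (hq m))
end

section
/- Let P be a fixed polynomial with nonnegative coefficients and zero constant term, and for each m let Q_m be a polynomial with nonnegative coefficients and zero constant term and R_m > 0 with P(R_m) + Q_m(R_m) = 1, and suppose every nonzero coefficient of Q_m has degree ≥ a_m where a_m ≥ 1. If a_m → ∞ and R_m → R where R > 0 and P(R) < 1, then (P + Q_m)'(R_m) → ∞ as m → ∞. -/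
open Filter

lemma evnn (Q : Polynomial ℝ) (hQ : ∀ i, 0 ≤ Q.coeff i) (x : ℝ) (hx : 0 ≤ x) :
    0 ≤ Q.eval x := by
  rw [Polynomial.eval_eq_sum, Polynomial.sum]
  exact Finset.sum_nonneg fun i _ => mul_nonneg (hQ i) (pow_nonneg hx i)

lemma key (Q : Polynomial ℝ) (hQ : ∀ i, 0 ≤ Q.coeff i) (a : ℕ)
    (ha : ∀ i, Q.coeff i ≠ 0 → a ≤ i) (x : ℝ) (hx : 0 < x) :
    (a : ℝ) * Q.eval x ≤ x * (Polynomial.derivative Q).eval x := by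
  rw [Polynomial.derivative_eval, Polynomial.eval_eq_sum, Polynomial.sum, Polynomial.sum,
    Finset.mul_sum, Finset.mul_sum]
  apply Finset.sum_le_sum
  intro n hn
  have hc := hQ n
  have han := ha n (Polynomial.mem_support_iff.mp hn)
  have hxn : 0 ≤ x := hx.le
  rcases Nat.eq_zero_or_pos n with h0 | hpos
  · subst h0
    have : a = 0 := Nat.le_zero.mp han
    subst this
    simp
  · have hxpow : x * x ^ (n - 1) = x ^ n := by
      rw [← pow_succ']
      congr 1
      omega
    have heq : x * (Q.coeff n * n * x ^ (n - 1)) = Q.coeff n * n * x ^ n := by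
      rw [mul_comm x, mul_assoc, mul_comm (x ^ (n-1)) x, hxpow]
    rw [heq]
    have hna : (a : ℝ) ≤ (n : ℝ) := by exact_mod_cast han
    have hxp : (0:ℝ) ≤ x ^ n := pow_nonneg hxn n
    nlinarith [mul_nonneg (mul_nonneg (sub_nonneg.mpr hna) hc) hxp]

theorem stmt17 (P : Polynomial ℝ) (hP : ∀ i, 0 ≤ P.coeff i) (hP0 : P.coeff 0 = 0)
    (Q : ℕ → Polynomial ℝ) (hQ : ∀ m i, 0 ≤ (Q m).coeff i)
    (a : ℕ → ℕ) (hamin : ∀ m i, (Q m).coeff i ≠ 0 → a m ≤ i)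
    (haT : Tendsto a atTop atTop)
    (Rm : ℕ → ℝ) (hRm : ∀ m, 0 < Rm m)
    (hroot : ∀ m, P.eval (Rm m) + (Q m).eval (Rm m) = 1)
    (R : ℝ) (hR : 0 < R) (hRlim : Tendsto Rm atTop (nhds R))
    (hPR : P.eval R < 1) :
    Tendsto (fun m => (Polynomial.derivative P).eval (Rm m) +
        (Polynomial.derivative (Q m)).eval (Rm m)) atTop atTop := by
  set ε : ℝ := (1 - P.eval R) / 2 with hε
  have hεpos : 0 < ε := by simp [hε]; linarith
  -- P.eval (Rm m) → P.eval R
  have hPev : Tendsto (fun m => P.eval (Rm m)) atTop (nhds (P.eval R)) :=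
    (Polynomial.continuous_aeval P).continuousAt.tendsto.comp hRlim
  -- eventually Q eval ≥ ε
  have hQev : ∀ᶠ m in atTop, ε ≤ (Q m).eval (Rm m) := by
    have : ∀ᶠ m in atTop, P.eval (Rm m) < P.eval R + ε := by
      have := hPev (Iio_mem_nhds (show P.eval R < P.eval R + ε by linarith))
      exact this
    filter_upwards [this] with m hm
    have := hroot m
    have : (Q m).eval (Rm m) = 1 - P.eval (Rm m) := by linarith
    rw [this]
    simp only [hε] at *
    linarith
  have hRb : ∀ᶠ m in atTop, Rm m ≤ 2 * R := by
    have := hRlim (Iic_mem_nhds (show R < 2 * R by linarith))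
    exact this
  have hQd : ∀ m, 0 ≤ (Polynomial.derivative (Q m)).eval (Rm m) := by
    intro m
    refine evnn _ (fun i => ?_) _ (hRm m).le
    rw [Polynomial.coeff_derivative]
    exact mul_nonneg (hQ m _) (by positivity)
  have hPd : ∀ m, 0 ≤ (Polynomial.derivative P).eval (Rm m) := by
    intro m
    refine evnn _ (fun i => ?_) _ (hRm m).le
    rw [Polynomial.coeff_derivative]
    exact mul_nonneg (hP _) (by positivity)
  -- lower bound tendsto atTop
  have hlow : Tendsto (fun m => (a m : ℝ) * (ε / (2 * R))) atTop atTop := by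
    exact Tendsto.atTop_mul_const (by positivity)
      (tendsto_natCast_atTop_atTop.comp haT)
  refine tendsto_atTop_mono' _ ?_ hlow
  filter_upwards [hQev, hRb] with m hQm hRm2
  have hk := key (Q m) (hQ m) (a m) (hamin m) (Rm m) (hRm m)
  have h1 : (a m : ℝ) * ε ≤ (a m : ℝ) * (Q m).eval (Rm m) := by
    apply mul_le_mul_of_nonneg_left hQm (by positivity)
  have h2 : Rm m * (Polynomial.derivative (Q m)).eval (Rm m) ≤
      2 * R * (Polynomial.derivative (Q m)).eval (Rm m) :=
    mul_le_mul_of_nonneg_right hRm2 (hQd m)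
  have h3 : (a m : ℝ) * ε ≤ 2 * R * (Polynomial.derivative (Q m)).eval (Rm m) := by
    linarith
  have h4 : (a m : ℝ) * (ε / (2 * R)) ≤ (Polynomial.derivative (Q m)).eval (Rm m) := by
    rw [mul_div_assoc', div_le_iff₀ (by positivity)]
    linarith [h3]
  linarith [hPd m]
end
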